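/- arXiv:0904.0328 — 4 statements merged into one kernel-verified Lean document; each statement's English description precedes it below -/
import Mathlib

section
/- For every m : ℕ, natDegree((F (m+1)).num) = 2·natDegree((F m).num) + δ(m), as an identity in ℤ, where δ(m) = 0 if m ≡ 0, 1 or 5 (mod 6), δ(m) = −1 if m ≡ 3 (mod 6), and δ(m) = 1 if m ≡ 2 or 4 (mod 6). -/
/-!
Write `F m = P / Q` in lowest terms. The map `z ↦ (z - X)(z - 1) / z²` sends `P / Q` to
`(P - X Q)(P - Q) / P²`, and the only common factor these can have is `X`, which occurs when
`P / Q` vanishes at `0`.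

At `0` the germ of `F m` runs through a cycle of length three: a simple zero with derivative
`≠ 1`, a simple pole with residue `≠ -1`, the value `1` with derivative `≠ 0, 1`. So one factor
`X` cancels exactly when `3 ∣ m`. At `∞` the germ alternates between a finite limit `> 1`, where
`deg (P - X Q)(P - Q) = 2 deg P + 1`, and a simple pole with negative leading coefficient, where it
is `2 deg P`. Hence `deg p_{m+1} = 2 deg p_m + [2 ∣ m] - [3 ∣ m]`.
-/

open Polynomial

noncomputable def F : ℕ → RatFunc ℚ
  | 0 => (2 * RatFunc.X) / (RatFunc.X + 1)
  | (m + 1) => ((F m - RatFunc.X) * (F m - 1)) / (F m) ^ 2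

section Field

variable {K : Type*} [Field K] {P Q : K[X]}

theorem RatFunc.natDegree_num_div_of_isCoprime (hQ : Q ≠ 0) (h : IsCoprime P Q) :
    (algebraMap K[X] (RatFunc K) P / algebraMap _ _ Q).num.natDegree = P.natDegree := by
  set x := algebraMap K[X] (RatFunc K) P / algebraMap _ _ Q
  have hx : x.num * Q = P * x.denom := (RatFunc.num_mul_eq_mul_denom_iff hQ).2 rfl
  have hdvd : P ∣ x.num := h.dvd_of_dvd_mul_right ⟨x.denom, hx⟩
  exact natDegree_eq_of_degree_eq <| degree_eq_degree_of_associated <|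
    associated_of_dvd_dvd (RatFunc.num_div_dvd P hQ) hdvd

theorem Polynomial.natDegree_sub_eq_of_leadingCoeff_ne (hd : P.natDegree = Q.natDegree)
    (hlc : P.leadingCoeff ≠ Q.leadingCoeff) :
    (P - Q).natDegree = P.natDegree ∧ (P - Q).leadingCoeff = P.leadingCoeff - Q.leadingCoeff := by
  have hcoeff : (P - Q).coeff P.natDegree = P.leadingCoeff - Q.leadingCoeff := by
    rw [coeff_sub, leadingCoeff, leadingCoeff, hd]
  have hdeg : (P - Q).natDegree = P.natDegree :=
    natDegree_eq_of_le_of_coeff_ne_zero ((natDegree_sub_le P Q).trans (by rw [hd, max_self]))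
      (by rw [hcoeff]; exact sub_ne_zero.2 hlc)
  exact ⟨hdeg, by rw [leadingCoeff, hdeg, hcoeff]⟩

theorem Polynomial.isCoprime_X_of_coeff_zero_ne_zero (h : P.coeff 0 ≠ 0) : IsCoprime X P :=
  (irreducible_X.coprime_iff_not_dvd).2 (by rwa [X_dvd_iff])

end Field

theorem isCoprime_self_sub_left_iff {R : Type*} [CommRing R] {x y : R} :
    IsCoprime (x - y) x ↔ IsCoprime y x := by
  rw [← IsCoprime.mul_sub_left_left_iff (x := y) (y := x) (z := 1), mul_one]

section AtZero

variable {K : Type*} [Field K] {P Q u : K[X]}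

/- The three types of germ of `P / Q` at `0`, read off the coefficients of degree `0` and `1`:
a simple zero with derivative `≠ 1`, a simple pole with residue `≠ -1`, and the value `1` with
derivative `≠ 0, 1`. -/

def SimpleZeroAtZero (P Q : K[X]) : Prop :=
  P.coeff 0 = 0 ∧ Q.coeff 0 ≠ 0 ∧ P.coeff 1 ≠ 0 ∧ P.coeff 1 ≠ Q.coeff 0

def SimplePoleAtZero (P Q : K[X]) : Prop :=
  Q.coeff 0 = 0 ∧ P.coeff 0 ≠ 0 ∧ Q.coeff 1 ≠ 0 ∧ P.coeff 0 + Q.coeff 1 ≠ 0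

def EqOneAtZero (P Q : K[X]) : Prop :=
  P.coeff 0 = Q.coeff 0 ∧ P.coeff 0 ≠ 0 ∧ (P - Q).coeff 1 ≠ 0 ∧ (P - Q).coeff 1 ≠ P.coeff 0

theorem isCoprime_sub_X_mul_mul_sub_sq (h : IsCoprime P Q) (hP : P.coeff 0 ≠ 0) :
    IsCoprime ((P - X * Q) * (P - Q)) (P ^ 2) := by
  have hXQ : IsCoprime (X * Q) P := (isCoprime_X_of_coeff_zero_ne_zero hP).mul_left h.symm
  exact ((isCoprime_self_sub_left_iff.2 hXQ).mul_left
    (isCoprime_self_sub_left_iff.2 h.symm)).pow_right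

theorem SimpleZeroAtZero.isCoprime_step (hcop : IsCoprime (X * u) Q)
    (h : SimpleZeroAtZero (X * u) Q) : IsCoprime ((u - Q) * (X * u - Q)) (X * u ^ 2) := by
  obtain ⟨-, hQ0, -, huQ⟩ := h
  have hQu : IsCoprime Q u := hcop.of_mul_left_right.symm
  have hXuQ : IsCoprime X (u - Q) :=
    isCoprime_X_of_coeff_zero_ne_zero (by simpa [coeff_X_mul] using sub_ne_zero.2 huQ)
  have hXXuQ : IsCoprime X (X * u - Q) :=
    isCoprime_X_of_coeff_zero_ne_zero (by simpa using hQ0)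
  have huuQ : IsCoprime (u - Q) u := isCoprime_self_sub_left_iff.2 hQu
  have huXuQ : IsCoprime (X * u - Q) u := by
    rw [mul_comm]
    exact IsCoprime.mul_sub_left_left_iff.2 hQu
  exact (hXuQ.symm.mul_left hXXuQ.symm).mul_right ((huuQ.mul_left huXuQ).pow_right)

theorem SimpleZeroAtZero.step [LinearOrder K] [IsStrictOrderedRing K]
    (h : SimpleZeroAtZero (X * u) Q) : SimplePoleAtZero ((u - Q) * (X * u - Q)) (X * u ^ 2) := by
  obtain ⟨-, hQ0, hu0, huQ⟩ := h
  simp only [SimplePoleAtZero, mul_coeff_zero, mul_coeff_one, coeff_sub, coeff_X_zero,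
    coeff_X_one, sq, zero_mul, one_mul, zero_add, zero_sub] at *
  refine ⟨trivial, mul_ne_zero (sub_ne_zero.2 huQ) (neg_ne_zero.2 hQ0), mul_ne_zero hu0 hu0, ?_⟩
  -- with `a = u.coeff 0`, `b = Q.coeff 0`, the residue `(b - a) b / a²` of the image is not `-1`
  -- because `a² - a b + b² > 0`
  nlinarith [sq_nonneg (u.coeff 0 - Q.coeff 0), mul_self_pos.2 hu0, mul_self_pos.2 hQ0]

theorem SimplePoleAtZero.step (h : SimplePoleAtZero P Q) :
    EqOneAtZero ((P - X * Q) * (P - Q)) (P ^ 2) := by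
  obtain ⟨hQ0, hP0, hQ1, hPQ⟩ := h
  simp only [EqOneAtZero, mul_coeff_zero, mul_coeff_one, coeff_sub, coeff_X_zero,
    coeff_X_one, sq, hQ0, zero_mul, mul_zero, sub_zero, zero_add]
  refine ⟨trivial, mul_ne_zero hP0 hP0, fun h => mul_ne_zero hP0 hQ1 ?_,
    fun h => mul_ne_zero hP0 hPQ ?_⟩
  · linear_combination -h
  · linear_combination -h

theorem EqOneAtZero.step (h : EqOneAtZero P Q) :
    SimpleZeroAtZero ((P - X * Q) * (P - Q)) (P ^ 2) := by
  obtain ⟨hPQ, hP0, hc, hcP⟩ := h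
  simp only [SimpleZeroAtZero, mul_coeff_zero, mul_coeff_one, coeff_sub, coeff_X_zero,
    coeff_X_one, sq, ← hPQ, zero_mul, one_mul, sub_zero, zero_add, sub_self, mul_zero,
    add_zero] at *
  exact ⟨trivial, mul_ne_zero hP0 hP0, mul_ne_zero hP0 hc,
    fun h => hcP (mul_left_cancel₀ hP0 h)⟩

end AtZero

section AtInfty

variable {K : Type*} [Field K] {P Q g : K[X]}

theorem Polynomial.ne_zero_of_leadingCoeff_div_ne_zero
    (h : P.leadingCoeff / Q.leadingCoeff ≠ 0) : P ≠ 0 ∧ Q ≠ 0 := by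
  simpa only [div_ne_zero_iff, leadingCoeff_ne_zero] using h

theorem Polynomial.leadingCoeff_mul_div_leadingCoeff_mul (hg : g ≠ 0) :
    (g * P).leadingCoeff / (g * Q).leadingCoeff = P.leadingCoeff / Q.leadingCoeff := by
  rw [leadingCoeff_mul, leadingCoeff_mul, mul_div_mul_left _ _ (leadingCoeff_ne_zero.2 hg)]

variable [LinearOrder K]

def LimitGtOneAtInfty (P Q : K[X]) : Prop :=
  P.natDegree = Q.natDegree ∧ 1 < P.leadingCoeff / Q.leadingCoeff

def NegPoleAtInfty (P Q : K[X]) : Prop :=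
  P.natDegree = Q.natDegree + 1 ∧ P.leadingCoeff / Q.leadingCoeff < 0

theorem NegPoleAtInfty.ne_zero (h : NegPoleAtInfty P Q) : P ≠ 0 ∧ Q ≠ 0 :=
  ne_zero_of_leadingCoeff_div_ne_zero h.2.ne

theorem NegPoleAtInfty.of_mul_left (hg : g ≠ 0) (h : NegPoleAtInfty (g * P) (g * Q)) :
    NegPoleAtInfty P Q := by
  obtain ⟨hP, hQ⟩ := h.ne_zero
  obtain ⟨hdeg, hlc⟩ := h
  rw [natDegree_mul hg (right_ne_zero_of_mul hP), natDegree_mul hg (right_ne_zero_of_mul hQ)]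
    at hdeg
  exact ⟨by omega, by rwa [leadingCoeff_mul_div_leadingCoeff_mul hg] at hlc⟩

variable [IsStrictOrderedRing K]

theorem LimitGtOneAtInfty.ne_zero (h : LimitGtOneAtInfty P Q) : P ≠ 0 ∧ Q ≠ 0 :=
  ne_zero_of_leadingCoeff_div_ne_zero (zero_lt_one.trans h.2).ne'

theorem LimitGtOneAtInfty.of_mul_left (hg : g ≠ 0) (h : LimitGtOneAtInfty (g * P) (g * Q)) :
    LimitGtOneAtInfty P Q := by
  obtain ⟨hP, hQ⟩ := h.ne_zero
  obtain ⟨hdeg, hlc⟩ := h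
  rw [natDegree_mul hg (right_ne_zero_of_mul hP), natDegree_mul hg (right_ne_zero_of_mul hQ)]
    at hdeg
  exact ⟨by omega, by rwa [leadingCoeff_mul_div_leadingCoeff_mul hg] at hlc⟩

theorem LimitGtOneAtInfty.step (h : LimitGtOneAtInfty P Q) :
    NegPoleAtInfty ((P - X * Q) * (P - Q)) (P ^ 2) ∧
      ((P - X * Q) * (P - Q)).natDegree = 2 * P.natDegree + 1 := by
  obtain ⟨hP, hQ⟩ := h.ne_zero
  obtain ⟨hdeg, hlc⟩ := h
  have hb : Q.leadingCoeff ≠ 0 := leadingCoeff_ne_zero.2 hQ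
  have hPQ : P.leadingCoeff ≠ Q.leadingCoeff := fun h => by
    rw [h, div_self hb] at hlc; exact hlc.false
  have hlt : P.natDegree < (X * Q).natDegree := by rw [natDegree_X_mul hQ]; omega
  have hdeg₁ := natDegree_sub_eq_right_of_natDegree_lt hlt
  have hlc₁ : (P - X * Q).leadingCoeff = -Q.leadingCoeff := by
    rw [leadingCoeff_sub_of_degree_lt' (degree_lt_degree hlt), mul_comm, leadingCoeff_mul_X]
  obtain ⟨hdeg₂, hlc₂⟩ := natDegree_sub_eq_of_leadingCoeff_ne hdeg hPQ
  have hne₁ : P - X * Q ≠ 0 := leadingCoeff_ne_zero.1 (by rw [hlc₁]; exact neg_ne_zero.2 hb)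
  have hne₂ : P - Q ≠ 0 := leadingCoeff_ne_zero.1 (by rw [hlc₂]; exact sub_ne_zero.2 hPQ)
  have hdegN : ((P - X * Q) * (P - Q)).natDegree = 2 * P.natDegree + 1 := by
    rw [natDegree_mul hne₁ hne₂, hdeg₁, hdeg₂, natDegree_X_mul hQ]; omega
  refine ⟨⟨by rw [hdegN, natDegree_pow], ?_⟩, hdegN⟩
  rw [leadingCoeff_mul, leadingCoeff_pow, hlc₁, hlc₂]
  have ha : P.leadingCoeff ≠ 0 := leadingCoeff_ne_zero.2 hP
  calc -Q.leadingCoeff * (P.leadingCoeff - Q.leadingCoeff) / P.leadingCoeff ^ 2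
      = -((P.leadingCoeff / Q.leadingCoeff - 1) / (P.leadingCoeff / Q.leadingCoeff) ^ 2) := by
        field_simp
    _ < 0 := neg_neg_of_pos (div_pos (sub_pos.2 hlc) (pow_pos (zero_lt_one.trans hlc) 2))

theorem NegPoleAtInfty.step (h : NegPoleAtInfty P Q) :
    LimitGtOneAtInfty ((P - X * Q) * (P - Q)) (P ^ 2) ∧
      ((P - X * Q) * (P - Q)).natDegree = 2 * P.natDegree := by
  obtain ⟨hP, hQ⟩ := h.ne_zero
  obtain ⟨hdeg, hlc⟩ := h
  have ha : P.leadingCoeff ≠ 0 := leadingCoeff_ne_zero.2 hP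
  have hb : Q.leadingCoeff ≠ 0 := leadingCoeff_ne_zero.2 hQ
  have hPQ : P.leadingCoeff ≠ (X * Q).leadingCoeff := fun h => by
    rw [h, mul_comm, leadingCoeff_mul_X, div_self hb] at hlc; exact absurd hlc (by norm_num)
  obtain ⟨hdeg₁, hlc₁⟩ :=
    natDegree_sub_eq_of_leadingCoeff_ne (by rw [natDegree_X_mul hQ, hdeg]) hPQ
  have hlt : Q.natDegree < P.natDegree := by omega
  have hdeg₂ := natDegree_sub_eq_left_of_natDegree_lt hlt
  have hlc₂ := leadingCoeff_sub_of_degree_lt (degree_lt_degree hlt)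
  have hne₁ : P - X * Q ≠ 0 := leadingCoeff_ne_zero.1 (by rw [hlc₁]; exact sub_ne_zero.2 hPQ)
  have hne₂ : P - Q ≠ 0 := leadingCoeff_ne_zero.1 (by rw [hlc₂]; exact ha)
  have hdegN : ((P - X * Q) * (P - Q)).natDegree = 2 * P.natDegree := by
    rw [natDegree_mul hne₁ hne₂, hdeg₁, hdeg₂]; omega
  refine ⟨⟨by rw [hdegN, natDegree_pow], ?_⟩, hdegN⟩
  rw [leadingCoeff_mul, leadingCoeff_pow, hlc₁, hlc₂, mul_comm X, leadingCoeff_mul_X]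
  calc 1 < 1 - (P.leadingCoeff / Q.leadingCoeff)⁻¹ := by linarith [inv_lt_zero.2 hlc]
    _ = (P.leadingCoeff - Q.leadingCoeff) * P.leadingCoeff / P.leadingCoeff ^ 2 := by
      field_simp

end AtInfty

section Phase

variable {K : Type*} [Field K] [LinearOrder K] [IsStrictOrderedRing K] {P Q : K[X]}

def AtZero : ℕ → K[X] → K[X] → Prop
  | 0 => SimpleZeroAtZero
  | 1 => SimplePoleAtZero
  | _ => EqOneAtZero

def AtInfty : ℕ → K[X] → K[X] → Prop
  | 0 => LimitGtOneAtInfty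
  | _ => NegPoleAtInfty

theorem AtZero.exists_step {n : ℕ} (hcop : IsCoprime P Q) (h : AtZero (n % 3) P Q) :
    ∃ g P' Q', g ≠ 0 ∧ g.natDegree = (if n % 3 = 0 then 1 else 0) ∧
      g * P' = (P - X * Q) * (P - Q) ∧ g * Q' = P ^ 2 ∧
      IsCoprime P' Q' ∧ AtZero ((n + 1) % 3) P' Q' := by
  have hn : n % 3 = 0 ∨ n % 3 = 1 ∨ n % 3 = 2 := by omega
  rcases hn with hn | hn | hn
  · rw [hn] at h
    change SimpleZeroAtZero P Q at h
    obtain ⟨u, rfl⟩ : X ∣ P := X_dvd_iff.2 h.1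
    rw [show (n + 1) % 3 = 1 by omega]
    exact ⟨X, _, _, X_ne_zero, by simp [hn], by ring, by ring, h.isCoprime_step hcop, h.step⟩
  · rw [hn] at h
    change SimplePoleAtZero P Q at h
    rw [show (n + 1) % 3 = 2 by omega]
    exact ⟨1, _, _, one_ne_zero, by simp [hn], one_mul _, one_mul _,
      isCoprime_sub_X_mul_mul_sub_sq hcop h.2.1, h.step⟩
  · rw [hn] at h
    change EqOneAtZero P Q at h
    rw [show (n + 1) % 3 = 0 by omega]
    exact ⟨1, _, _, one_ne_zero, by simp [hn], one_mul _, one_mul _,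
      isCoprime_sub_X_mul_mul_sub_sq hcop h.2.1, h.step⟩

theorem AtInfty.ne_zero {i : ℕ} (h : AtInfty i P Q) : P ≠ 0 ∧ Q ≠ 0 := by
  cases i with
  | zero => exact LimitGtOneAtInfty.ne_zero h
  | succ => exact NegPoleAtInfty.ne_zero h

theorem AtInfty.of_mul_left {i : ℕ} {g : K[X]} (hg : g ≠ 0) (h : AtInfty i (g * P) (g * Q)) :
    AtInfty i P Q := by
  cases i with
  | zero => exact LimitGtOneAtInfty.of_mul_left hg h
  | succ => exact NegPoleAtInfty.of_mul_left hg h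

theorem AtInfty.step {n : ℕ} (h : AtInfty (n % 2) P Q) :
    AtInfty ((n + 1) % 2) ((P - X * Q) * (P - Q)) (P ^ 2) ∧
      ((P - X * Q) * (P - Q)).natDegree = 2 * P.natDegree + (if n % 2 = 0 then 1 else 0) := by
  rcases Nat.mod_two_eq_zero_or_one n with hn | hn
  · rw [hn] at h
    rw [show (n + 1) % 2 = 1 by omega, if_pos hn]
    exact LimitGtOneAtInfty.step h
  · rw [hn] at h
    rw [show (n + 1) % 2 = 0 by omega, if_neg (by omega), add_zero]
    exact NegPoleAtInfty.step h

end Phase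

section QuadraticMap

variable {K : Type*} [Field K] {P Q : K[X]}

noncomputable def quadraticMap (z : RatFunc K) : RatFunc K := (z - RatFunc.X) * (z - 1) / z ^ 2

theorem quadraticMap_div (hP : P ≠ 0) (hQ : Q ≠ 0) :
    quadraticMap (algebraMap K[X] (RatFunc K) P / algebraMap _ _ Q) =
      algebraMap _ _ ((P - X * Q) * (P - Q)) / algebraMap _ _ (P ^ 2) := by
  have hP' := RatFunc.algebraMap_ne_zero hP
  have hQ' := RatFunc.algebraMap_ne_zero hQ
  simp only [quadraticMap, map_mul, map_sub, map_pow, RatFunc.algebraMap_X]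
  field_simp

variable [LinearOrder K] [IsStrictOrderedRing K]

def PhaseRep (n : ℕ) (x : RatFunc K) (P Q : K[X]) : Prop :=
  IsCoprime P Q ∧ x = algebraMap K[X] (RatFunc K) P / algebraMap _ _ Q ∧
    AtZero (n % 3) P Q ∧ AtInfty (n % 2) P Q

theorem PhaseRep.natDegree_num {n : ℕ} {x : RatFunc K} (h : PhaseRep n x P Q) :
    x.num.natDegree = P.natDegree := by
  obtain ⟨hcop, rfl, -, hinf⟩ := h
  exact RatFunc.natDegree_num_div_of_isCoprime hinf.ne_zero.2 hcop

theorem PhaseRep.exists_quadraticMap {n : ℕ} {x : RatFunc K} (h : PhaseRep n x P Q) :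
    ∃ P' Q', PhaseRep (n + 1) (quadraticMap x) P' Q' ∧
      (P'.natDegree : ℤ) =
        2 * P.natDegree + (if n % 2 = 0 then 1 else 0) - (if n % 3 = 0 then 1 else 0) := by
  obtain ⟨hcop, rfl, hzero, hinf⟩ := h
  obtain ⟨hP, hQ⟩ := hinf.ne_zero
  obtain ⟨g, P', Q', hg, hdeg_g, hgP, hgQ, hcop', hzero'⟩ := hzero.exists_step hcop
  obtain ⟨hinf', hdeg⟩ := hinf.step
  rw [← hgP, ← hgQ] at hinf'
  rw [← hgP, natDegree_mul hg (hinf'.of_mul_left hg).ne_zero.1] at hdeg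
  refine ⟨P', Q', ⟨hcop', ?_, hzero', hinf'.of_mul_left hg⟩, ?_⟩
  · rw [quadraticMap_div hP hQ, ← hgP, ← hgQ, map_mul, map_mul,
      mul_div_mul_left _ _ (RatFunc.algebraMap_ne_zero hg)]
  · split_ifs at hdeg_g hdeg ⊢ <;> omega

end QuadraticMap

theorem F_succ (m : ℕ) : F (m + 1) = quadraticMap (F m) := rfl

theorem phaseRep_F_zero : PhaseRep 0 (F 0) (C 2 * X) (X + C 1) := by
  refine ⟨?_, ?_, ?_, ?_⟩
  · exact (isCoprime_mul_unit_left_left (isUnit_C.2 (by norm_num)) _ _).2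
      (isCoprime_X_of_coeff_zero_ne_zero (by simp))
  · simp [F, map_ofNat]
  · norm_num [AtZero, SimpleZeroAtZero]
  · refine ⟨by rw [natDegree_C_mul_X _ two_ne_zero, natDegree_X_add_C], ?_⟩
    rw [leadingCoeff_C_mul_X, leadingCoeff_X_add_C]
    norm_num

theorem exists_phaseRep_F (m : ℕ) : ∃ P Q, PhaseRep m (F m) P Q := by
  induction m with
  | zero => exact ⟨_, _, phaseRep_F_zero⟩
  | succ m ih =>
    obtain ⟨P, Q, h⟩ := ih
    obtain ⟨P', Q', h', -⟩ := h.exists_quadraticMap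
    exact ⟨P', Q', h'⟩

theorem F_num_natDegree_rec (m : ℕ) :
    ((F (m + 1)).num.natDegree : ℤ) =
      2 * ((F m).num.natDegree : ℤ) +
        (if m % 6 = 3 then -1 else if m % 6 = 2 ∨ m % 6 = 4 then 1 else 0) := by
  obtain ⟨P, Q, h⟩ := exists_phaseRep_F m
  obtain ⟨P', Q', h', hdeg⟩ := h.exists_quadraticMap
  rw [F_succ, h'.natDegree_num, h.natDegree_num, hdeg]
  split_ifs <;> omega
end

section
/- For every m ≥ 3: 28·((B^(m−3)).mulVec ![0,0,0,1]) 2 = 2^m + v(m), where v(m) = −8, −16, 24 according as m ≡ 0, 1, 2 (mod 3); and 28·((B^(m−3)).mulVec ![0,1,0,0]) 2 = 2^m + v'(m), where v'(m) = −8, 12, −4 according as m ≡ 0, 1, 2 (mod 3). -/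
/-!
The characteristic polynomial of `B` is `(X - 2)(X³ - 1)`, with `(1,2,2,2)` spanning the
eigenspace of `2`. Hence each of `28 e₄` and `28 e₂` splits
as `(4,8,8,8) + p` with `B³ p = p`, and `28 B^n e = 2^n (4,8,8,8) + B^(n mod 3) p`; the three
periodic values `(B^r p) 2` are the corrections `v(m)`, `v'(m)`.
-/

def B : Matrix (Fin 4) (Fin 4) ℤ :=
  !![0, 0, 0, 1; 0, 1, 1, 0; 2, 1, 0, 0; 0, 0, 1, 1]

open Matrix

namespace Matrix

variable {n R : Type*} [Fintype n] [DecidableEq n] [CommSemiring R] {M : Matrix n n R}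

theorem pow_mulVec_of_mulVec_eq_smul {a : R} {v : n → R} (hv : M *ᵥ v = a • v) (k : ℕ) :
    M ^ k *ᵥ v = a ^ k • v := by
  induction k with
  | zero => simp
  | succ k ih => rw [pow_succ', ← mulVec_mulVec, ih, mulVec_smul, hv, smul_smul, pow_succ]

theorem pow_mulVec_eq_pow_mod_mulVec {p : ℕ} {v : n → R} (hv : M ^ p *ᵥ v = v) (k : ℕ) :
    M ^ k *ᵥ v = M ^ (k % p) *ᵥ v := by
  have hfix : ∀ q : ℕ, (M ^ p) ^ q *ᵥ v = v := fun q => by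
    rw [pow_mulVec_of_mulVec_eq_smul (a := 1) (by rw [hv, one_smul]), one_pow, one_smul]
  rw [← Nat.mod_add_div k p, pow_add, pow_mul, ← mulVec_mulVec, hfix, Nat.add_mul_mod_self_left,
    Nat.mod_mod]

theorem pow_mulVec_add_of_mulVec_eq_smul_of_pow_mulVec_eq_self {a : R} {c v : n → R} {p : ℕ}
    (hc : M *ᵥ c = a • c) (hv : M ^ p *ᵥ v = v) (k : ℕ) :
    M ^ k *ᵥ (c + v) = a ^ k • c + M ^ (k % p) *ᵥ v := by
  rw [mulVec_add, pow_mulVec_of_mulVec_eq_smul hc, pow_mulVec_eq_pow_mod_mulVec hv]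

end Matrix

theorem B_mulVec_eigenvector : B *ᵥ ![4, 8, 8, 8] = (2 : ℤ) • ![4, 8, 8, 8] := by
  decide

theorem twentyEight_mul_B_pow_mulVec_apply_two {v p : Fin 4 → ℤ}
    (hv : (28 : ℤ) • v = ![4, 8, 8, 8] + p) (hp : B ^ 3 *ᵥ p = p) (n : ℕ) :
    28 * (B ^ n *ᵥ v) 2 = 2 ^ (n + 3) + (B ^ (n % 3) *ᵥ p) 2 := by
  have h := congrFun
    (pow_mulVec_add_of_mulVec_eq_smul_of_pow_mulVec_eq_self B_mulVec_eigenvector hp n) 2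
  rw [← hv, mulVec_smul] at h
  simpa [pow_succ, mul_assoc] using h

theorem count_b_m (m : ℕ) (hm : 3 ≤ m) :
    (28 * ((B ^ (m - 3)).mulVec ![0, 0, 0, 1]) 2 =
        2 ^ m + (if m % 3 = 0 then -8 else if m % 3 = 1 then -16 else 24)) ∧
    (28 * ((B ^ (m - 3)).mulVec ![0, 1, 0, 0]) 2 =
        2 ^ m + (if m % 3 = 0 then -8 else if m % 3 = 1 then 12 else -4)) := by
  obtain ⟨n, rfl⟩ := Nat.exists_eq_add_of_le' hm
  rw [Nat.add_sub_cancel, Nat.add_mod_right,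
    twentyEight_mul_B_pow_mulVec_apply_two (p := ![-4, -8, -8, 20]) (by decide) (by decide),
    twentyEight_mul_B_pow_mulVec_apply_two (p := ![-4, 20, -8, -8]) (by decide) (by decide)]
  have hr := Nat.mod_lt n three_pos
  interval_cases n % 3 <;> simp only [add_right_inj] <;> decide
end

section
/- Define b : ℕ → ℤ by b m = ((B^(m−3)).mulVec ![0,0,0,1]) 2 for m ≥ 3 and b m = 0 for m < 3. Then for every m ≥ 1, 21·( 2·( ((A^(m−1)).mulVec ![0,0,1]) 1 + ((A^(m−1)).mulVec ![0,0,1]) 2 ) + ((B^(m−1)).mulVec ![0,0,0,1]) 3 + ∑_{k=0}^{⌊m/2⌋} b (m − 2k) ) = 22·2^m + τ(m), where τ(m) = −43, 19, 17, −29, 5, 31 according as m ≡ 0, 1, 2, 3, 4, 5 (mod 6). -/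
def A : Matrix (Fin 3) (Fin 3) ℤ := !![0, 1, 0; 0, 0, 1; 2, 1, 1]

def b (m : ℕ) : ℤ :=
  if 3 ≤ m then ((B ^ (m - 3)).mulVec ![0, 0, 0, 1]) 2 else 0

/-!
The columns of `A` and `B` sum to `2`, so `2` is an eigenvalue of both, and the remaining
eigenvalues are cube roots of unity. Concretely `7 • e = p + r` for the two starting vectors, with
`p` a `2`-eigenvector and `r` fixed by the cube of the matrix, so `7 • (M ^ n *ᵥ e)` is
`2 ^ n • p` plus a `3`-periodic vector. Then `21 * b (n + 3)` is `3 * 2 ^ (n + 1)` plus a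
`3`-periodic term, the sum of the `b (m - 2 * k)` is `2 ^ m / 21` up to a `6`-periodic error, and
both sides of the identity are `22 * 2 ^ m` plus a `6`-periodic term, compared value by value.
-/

open Matrix

section Eigen

variable {ι R : Type*} [Fintype ι] [DecidableEq ι] [CommSemiring R] {M : Matrix ι ι R}

theorem Matrix.pow_mulVec_of_mulVec_eq_smul_s15 {v : ι → R} {c : R} (h : M *ᵥ v = c • v)
    (n : ℕ) : M ^ n *ᵥ v = c ^ n • v := by
  induction n with
  | zero => simp
  | succ n ih => rw [pow_succ', ← mulVec_mulVec, ih, mulVec_smul, h, smul_smul, pow_succ]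

theorem Matrix.pow_mulVec_add_of_eigen_of_periodic {p r : ι → R} {c : R} {k : ℕ}
    (hp : M *ᵥ p = c • p) (hr : M ^ k *ᵥ r = r) (n : ℕ) :
    M ^ n *ᵥ (p + r) = c ^ n • p + M ^ (n % k) *ᵥ r := by
  have hrk : (M ^ k) ^ (n / k) *ᵥ r = r := by
    simpa using pow_mulVec_of_mulVec_eq_smul_s15 (M := M ^ k) (c := 1) (by rw [hr, one_smul]) (n / k)
  rw [mulVec_add, pow_mulVec_of_mulVec_eq_smul_s15 hp]
  congr 1
  conv_lhs => rw [← Nat.mod_add_div n k, pow_add, pow_mul, ← mulVec_mulVec, hrk]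

end Eigen

theorem seven_smul_A_pow_mulVec (n : ℕ) :
    (7 : ℤ) • (A ^ n *ᵥ ![0, 0, 1]) =
      (2 : ℤ) ^ n • ![1, 2, 4] + A ^ (n % 3) *ᵥ ![-1, -2, 3] := by
  rw [← mulVec_smul, show (7 : ℤ) • ![0, 0, 1] = ![1, 2, 4] + ![-1, -2, 3] by decide]
  exact pow_mulVec_add_of_eigen_of_periodic (by decide) (by decide) n

theorem seven_smul_B_pow_mulVec (n : ℕ) :
    (7 : ℤ) • (B ^ n *ᵥ ![0, 0, 0, 1]) =
      (2 : ℤ) ^ n • ![1, 2, 2, 2] + B ^ (n % 3) *ᵥ ![-1, -2, -2, 5] := by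
  rw [← mulVec_smul,
    show (7 : ℤ) • ![0, 0, 0, 1] = ![1, 2, 2, 2] + ![-1, -2, -2, 5] by decide]
  exact pow_mulVec_add_of_eigen_of_periodic (by decide) (by decide) n

theorem twentyOne_mul_b_add_three (n : ℕ) :
    21 * b (n + 3) = 3 * 2 ^ (n + 1) + 3 * (B ^ (n % 3) *ᵥ ![-1, -2, -2, 5]) 2 := by
  have h := congr_fun (seven_smul_B_pow_mulVec n) 2
  simp only [Pi.smul_apply, Pi.add_apply, smul_eq_mul, cons_val] at h
  rw [b, if_pos (by omega), Nat.add_sub_cancel]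
  linear_combination 3 * h

def bSum (m : ℕ) : ℤ := ∑ k ∈ Finset.range (m / 2 + 1), b (m - 2 * k)

theorem bSum_add_two (m : ℕ) : bSum (m + 2) = b (m + 2) + bSum m := by
  rw [bSum, bSum, show (m + 2) / 2 + 1 = m / 2 + 1 + 1 by omega, Finset.sum_range_succ']
  simp only [show ∀ k, m + 2 - 2 * (k + 1) = m - 2 * k by omega, mul_zero, Nat.sub_zero]
  ring

def bSumCorrection (m : ℕ) : ℤ := ![-22, -2, -4, -8, -16, 10] (Fin.ofNat 6 m)

theorem bSumCorrection_add_three (n : ℕ) :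
    bSumCorrection (n + 3) =
      bSumCorrection (n + 1) + 3 * (B ^ (n % 3) *ᵥ ![-1, -2, -2, 5]) 2 := by
  obtain ⟨q, r, hr, rfl⟩ : ∃ q r, r < 6 ∧ n = r + 6 * q :=
    ⟨n / 6, n % 6, Nat.mod_lt _ (by norm_num), (Nat.mod_add_div n 6).symm⟩
  simp only [bSumCorrection, Fin.ofNat, show (r + 6 * q) % 3 = r % 3 by omega,
    show (r + 6 * q + 3) % 6 = (r + 3) % 6 by omega,
    show (r + 6 * q + 1) % 6 = (r + 1) % 6 by omega]
  interval_cases r <;> rfl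

theorem twentyOne_mul_bSum (n : ℕ) :
    21 * bSum (n + 1) = 2 ^ (n + 1) + bSumCorrection (n + 1) := by
  induction n using Nat.twoStepInduction with
  | zero => rfl
  | one => rfl
  | more n ih _ =>
    rw [show n + 2 + 1 = n + 1 + 2 by rfl, bSum_add_two, mul_add, twentyOne_mul_b_add_three, ih,
      bSumCorrection_add_three]
    ring

theorem periodic_terms_eq (n : ℕ) :
    6 * ((A ^ (n % 3) *ᵥ ![-1, -2, 3]) 1 + (A ^ (n % 3) *ᵥ ![-1, -2, 3]) 2) +
        3 * (B ^ (n % 3) *ᵥ ![-1, -2, -2, 5]) 3 + bSumCorrection (n + 1) =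
      if (n + 1) % 6 = 0 then -43 else if (n + 1) % 6 = 1 then 19 else if (n + 1) % 6 = 2 then 17
        else if (n + 1) % 6 = 3 then -29 else if (n + 1) % 6 = 4 then 5 else 31 := by
  obtain ⟨q, r, hr, rfl⟩ : ∃ q r, r < 6 ∧ n = r + 6 * q :=
    ⟨n / 6, n % 6, Nat.mod_lt _ (by norm_num), (Nat.mod_add_div n 6).symm⟩
  simp only [bSumCorrection, Fin.ofNat, show (r + 6 * q) % 3 = r % 3 by omega,
    show (r + 6 * q + 1) % 6 = (r + 1) % 6 by omega]
  interval_cases r <;> rfl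

theorem total_count_sv1 (m : ℕ) (hm : 1 ≤ m) :
    21 * (2 * (((A ^ (m - 1)).mulVec ![0, 0, 1]) 1 + ((A ^ (m - 1)).mulVec ![0, 0, 1]) 2) +
        ((B ^ (m - 1)).mulVec ![0, 0, 0, 1]) 3 +
        ∑ k ∈ Finset.range (m / 2 + 1), b (m - 2 * k)) =
      22 * 2 ^ m + (if m % 6 = 0 then -43 else if m % 6 = 1 then 19 else if m % 6 = 2 then 17
        else if m % 6 = 3 then -29 else if m % 6 = 4 then 5 else 31) := by
  obtain ⟨n, rfl⟩ : ∃ n, m = n + 1 := ⟨m - 1, by omega⟩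
  have hA1 := congr_fun (seven_smul_A_pow_mulVec n) 1
  have hA2 := congr_fun (seven_smul_A_pow_mulVec n) 2
  have hB3 := congr_fun (seven_smul_B_pow_mulVec n) 3
  have hS := twentyOne_mul_bSum n
  simp only [Pi.smul_apply, Pi.add_apply, smul_eq_mul, cons_val] at hA1 hA2 hB3
  rw [bSum] at hS
  rw [Nat.add_sub_cancel, ← periodic_terms_eq]
  linear_combination 6 * hA1 + 6 * hA2 + 3 * hB3 + hS
end

section
/- Define g : ℕ → ℤ by g m = 0 for m ≤ 2, g 3 = 1, and g m = 2^(m−4) for m ≥ 4; define f : ℕ → ℤ by f m = ∑_{k=0}^{⌊m/3⌋} g (m − 3k); and define c : ℕ → ℤ by c m = ∑_{p=0}^{⌊m/2⌋} f (m − 2p). Then for every m ≥ 1, 21·c m = 2^(m+1) + w'(m), where w'(m) = −2, −4, −8, 5, −11, −1 according as m ≡ 0, 1, 2, 3, 4, 5 (mod 6). -/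
/-! The sums satisfy `f (m + 3) = f m + g (m + 3)` and `c (m + 2) = c m + f (m + 2)`. Since
`g (m + 4) = 2 ^ m`, induction gives `7 f (m + 1) = 2 ^ m + (3-periodic)` and then
`21 c (m + 1) = 2 ^ (m + 2) + (6-periodic)`: the exponential parts match the recurrences exactly,
so only the periodic corrections remain, and they satisfy the recurrences residue by residue. -/

def g (m : ℕ) : ℤ :=
  if m ≤ 2 then 0 else if m = 3 then 1 else 2 ^ (m - 4)

def f (m : ℕ) : ℤ :=
  ∑ k ∈ Finset.range (m / 3 + 1), g (m - 3 * k)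

def c (m : ℕ) : ℤ :=
  ∑ p ∈ Finset.range (m / 2 + 1), f (m - 2 * p)

open Finset

theorem sum_range_div_add_one_sub_mul_add {M : Type*} [AddCommMonoid M] (u : ℕ → M) {d : ℕ}
    (hd : 0 < d) (m : ℕ) :
    ∑ k ∈ range ((m + d) / d + 1), u (m + d - d * k) =
      ∑ k ∈ range (m / d + 1), u (m - d * k) + u (m + d) := by
  rw [Nat.add_div_right m hd, sum_range_succ', mul_zero, Nat.sub_zero]
  congr 1
  refine sum_congr rfl fun k _ => congr_arg u ?_
  rw [Nat.mul_succ]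
  omega

theorem f_add_three (m : ℕ) : f (m + 3) = f m + g (m + 3) :=
  sum_range_div_add_one_sub_mul_add g (by norm_num) m

theorem c_add_two (m : ℕ) : c (m + 2) = c m + f (m + 2) :=
  sum_range_div_add_one_sub_mul_add f (by norm_num) m

theorem g_add_four (m : ℕ) : g (m + 4) = 2 ^ m := by
  simp [g]

def fCorrection (m : ℕ) : ℤ :=
  if m % 3 = 0 then 3 else if m % 3 = 1 then -1 else -2

def cCorrection (m : ℕ) : ℤ :=
  if m % 6 = 0 then -2 else if m % 6 = 1 then -4 else if m % 6 = 2 then -8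
    else if m % 6 = 3 then 5 else if m % 6 = 4 then -11 else -1

theorem fCorrection_add_three (m : ℕ) : fCorrection (m + 3) = fCorrection m := by
  simp only [fCorrection, Nat.add_mod_right]

theorem cCorrection_add_two (m : ℕ) :
    cCorrection (m + 2) = cCorrection m + 3 * fCorrection (m + 2) := by
  simp only [cCorrection, fCorrection]
  split_ifs <;> omega

theorem seven_mul_f_add_one (m : ℕ) : 7 * f (m + 1) = 2 ^ m + fCorrection (m + 1) := by
  induction m using Nat.strong_induction_on with
  | _ m ih =>
    match m with
    | 0 | 1 | 2 => decide
    | n + 3 =>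
      have hn := ih n (by omega)
      rw [show n + 3 + 1 = n + 1 + 3 by ring, f_add_three, fCorrection_add_three, mul_add, hn,
        show n + 1 + 3 = n + 4 by ring, g_add_four]
      ring

theorem twentyOne_mul_c_add_one (m : ℕ) :
    21 * c (m + 1) = 2 ^ (m + 2) + cCorrection (m + 1) := by
  induction m using Nat.strong_induction_on with
  | _ m ih =>
    match m with
    | 0 | 1 => decide
    | n + 2 =>
      have hn := ih n (by omega)
      have hf := seven_mul_f_add_one (n + 2)
      rw [show n + 2 + 1 = n + 1 + 2 by ring, c_add_two, cCorrection_add_two, mul_add, hn]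
      linear_combination 3 * hf

theorem count_c_m_sv1 (m : ℕ) (hm : 1 ≤ m) :
    21 * c m =
      2 ^ (m + 1) + (if m % 6 = 0 then -2 else if m % 6 = 1 then -4 else if m % 6 = 2 then -8
        else if m % 6 = 3 then 5 else if m % 6 = 4 then -11 else -1) := by
  obtain ⟨n, rfl⟩ := Nat.exists_eq_add_of_le' hm
  exact twentyOne_mul_c_add_one n
end
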